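/- For each y ≥ R, the equation u = u(λ, y) (where u(λ,y) is the normalized first vertical moment of the exponential measure e^{-λ·} on D∖B((x̂,y),R)) has a unique solution λ = λ(u, y) > 0 for every u > 0, since λ ↦ u(λ, y) is a continuous strictly decreasing bijection from (0,∞) onto (0,∞). -/

import Mathlib

/-!
Push Lebesgue measure on `D ∖ B((x̂,y),R)` forward to the height coordinate, getting a measure `ν`
on `(0,∞)`. Then `h₁/h₀ (λ) = ∫ r e^{-λr} dν / ∫ e^{-λr} dν` is the derivative at `-λ` of the
cumulant generating function of `ν`, whose own derivative is the variance of the exponentially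
tilted measure. That variance is positive because `ν` is not a point mass, so `λ ↦ h₁/h₀` is
continuous and strictly decreasing.

Its range is all of `(0,∞)` because of three bounds on `ν`: its density is at most `|D_b|` on
`(0,∞)`, equals `|D_b|` above `y + R`, and is bounded below near `0` by the measure of the annulus
`B(x̂,R) ∖ B̄(x̂,R/2)`, which lies in `D_b` and outside the ball at low heights. They give
`h₁/h₀ ≥ c (1/λ - (y+R)² λ)` and `h₁/h₀ ≤ C / (λ (1 - e^{-λη}))` for constants `c, C, η > 0`,
so `h₁/h₀` tends to `∞` as `λ → 0` and to `0` as `λ → ∞`.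
-/

open MeasureTheory Real Set

/-- The region `D ∖ B((x̂,y),R)` where `D = D_b × (0,∞)`. -/
def gasRegion {E : Type*} [NormedAddCommGroup E]
    (Db : Set E) (xh : E) (R y : ℝ) : Set (E × ℝ) :=
  {p | p.1 ∈ Db ∧ 0 < p.2 ∧ R ^ 2 < ‖p.1 - xh‖ ^ 2 + (p.2 - y) ^ 2}

/-- `h_n(λ, y) = ∫_{D∖B((x̂,y),R)} λ r^n e^{-λ r} dx dr`. -/
noncomputable def gasMoment (d : ℕ) (Db : Set (EuclideanSpace ℝ (Fin (d - 1))))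
    (xh : EuclideanSpace ℝ (Fin (d - 1))) (R y : ℝ) (n : ℕ) (l : ℝ) : ℝ :=
  ∫ p in gasRegion Db xh R y, l * p.2 ^ n * exp (-l * p.2)

open Filter Topology ProbabilityTheory
open scoped ENNReal

lemma StrictAntiOn.existsUnique_eq_of_tendsto {g : ℝ → ℝ} (hg : StrictAntiOn g (Ioi 0))
    (hcont : ContinuousOn g (Ioi 0)) (h0 : Tendsto g (𝓝[>] 0) atTop)
    (htop : Tendsto g atTop (𝓝 0)) {u : ℝ} (hu : 0 < u) : ∃! l, 0 < l ∧ g l = u := by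
  obtain ⟨a, hga, ha⟩ := ((h0.eventually_gt_atTop u).and self_mem_nhdsWithin).exists
  obtain ⟨b, hgb, hb⟩ := ((htop.eventually (gt_mem_nhds hu)).and (eventually_gt_atTop 0)).exists
  have hab : a ≤ b := (hg.le_iff_ge hb ha).1 (hgb.trans hga).le
  obtain ⟨l, hl, hgl⟩ := intermediate_value_Icc' hab
    (hcont.mono fun x hx => lt_of_lt_of_le ha hx.1) ⟨hgb.le, hga.le⟩
  have hl0 : 0 < l := lt_of_lt_of_le ha hl.1
  exact ⟨l, ⟨hl0, hgl⟩, fun l' hl' => hg.injOn hl'.1 hl0 (hl'.2.trans hgl.symm)⟩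

section CumulantGeneratingFunction

variable {Ω : Type*} {mΩ : MeasurableSpace Ω} {X : Ω → ℝ} {μ : Measure Ω}

lemma iteratedDeriv_two_cgf_pos {v : ℝ} (hv : v ∈ interior (integrableExpSet X μ))
    (hX : ∀ c, μ {ω | X ω ≠ c} ≠ 0) : 0 < iteratedDeriv 2 (cgf X μ) v := by
  rw [iteratedDeriv_two_cgf_eq_integral hv]
  set m := deriv (cgf X μ) v
  have hμ : μ ≠ 0 := fun h => hX 0 (by simp [h])
  refine div_pos ?_ (mgf_pos' hμ (interior_subset (s := integrableExpSet X μ) hv))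
  have hint : Integrable (fun ω => (X ω - m) ^ 2 * exp (v * X ω)) μ := by
    refine (((integrable_pow_mul_exp_of_mem_interior_integrableExpSet hv 2).sub
      ((integrable_pow_mul_exp_of_mem_interior_integrableExpSet hv 1).const_mul (2 * m))).add
      ((interior_subset (s := integrableExpSet X μ) hv).const_mul (m ^ 2))).congr
      (ae_of_all _ fun ω => ?_)
    simp only [Pi.add_apply, Pi.sub_apply]
    ring
  rw [integral_pos_iff_support_of_nonneg (fun ω => by positivity) hint, pos_iff_ne_zero]
  convert hX m using 2
  ext ω
  simp [sub_eq_zero, (exp_pos _).ne']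

lemma continuousOn_deriv_cgf :
    ContinuousOn (deriv (cgf X μ)) (interior (integrableExpSet X μ)) :=
  analyticOnNhd_cgf.deriv.continuousOn

lemma strictMonoOn_deriv_cgf (hX : ∀ c, μ {ω | X ω ≠ c} ≠ 0) :
    StrictMonoOn (deriv (cgf X μ)) (interior (integrableExpSet X μ)) := by
  refine strictMonoOn_of_deriv_pos convex_integrableExpSet.interior continuousOn_deriv_cgf
    fun v hv => ?_
  rw [interior_interior] at hv
  simpa [iteratedDeriv_succ] using iteratedDeriv_two_cgf_pos hv hX

end CumulantGeneratingFunction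

section IntegralComparison

variable {α : Type*} [MeasurableSpace α] {μ ν : Measure α} {s : Set α} {f : α → ℝ}

lemma integral_le_toReal_mul_setIntegral {C : ℝ≥0∞} (hν : ν ≤ C • μ.restrict s) (hC : C ≠ ∞)
    (hs : MeasurableSet s) (hf0 : ∀ x ∈ s, 0 ≤ f x) (hf : IntegrableOn f s μ) :
    ∫ x, f x ∂ν ≤ C.toReal * ∫ x in s, f x ∂μ := by
  rw [← smul_eq_mul, ← integral_smul_measure]
  exact integral_mono_measure hν
    (Measure.ae_smul_measure ((ae_restrict_iff' hs).2 (ae_of_all _ hf0)) C) (hf.smul_measure hC)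

lemma toReal_mul_setIntegral_le_integral {c : ℝ≥0∞} (hν : c • μ.restrict s ≤ ν)
    (hf0 : 0 ≤ᵐ[ν] f) (hf : Integrable f ν) : c.toReal * ∫ x in s, f x ∂μ ≤ ∫ x, f x ∂ν := by
  rw [← smul_eq_mul, ← integral_smul_measure]
  exact integral_mono_measure hν hf0 hf

end IntegralComparison

section ExpIntegrals

variable {l : ℝ}

lemma integral_exp_neg_mul_Ioi_zero (hl : 0 < l) : ∫ x in Ioi 0, exp (-l * x) = l⁻¹ := by
  simpa using integral_exp_mul_Ioi (neg_lt_zero.2 hl) 0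

lemma integral_exp_neg_mul_Ioc_zero {η : ℝ} (hη : 0 ≤ η) (hl : 0 < l) :
    ∫ x in Ioc 0 η, exp (-l * x) = (1 - exp (-l * η)) * l⁻¹ := by
  rw [← intervalIntegral.integral_of_le hη, ← intervalIntegral.integral_Ioi_sub_Ioi
      (integrableOn_exp_mul_Ioi (neg_lt_zero.2 hl) 0) hη,
    integral_exp_neg_mul_Ioi_zero hl, integral_exp_mul_Ioi (neg_lt_zero.2 hl)]
  field_simp

lemma integral_mul_exp_neg_mul_Ioi_zero (hl : 0 < l) :
    ∫ x in Ioi 0, x * exp (-l * x) = (l ^ 2)⁻¹ := by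
  have := integral_rpow_mul_exp_neg_mul_Ioi two_pos hl
  norm_num at this
  simpa [neg_mul] using this

lemma integrableOn_mul_exp_neg_mul_Ioi_zero (hl : 0 < l) :
    IntegrableOn (fun x => x * exp (-l * x)) (Ioi 0) :=
  Integrable.of_integral_ne_zero (by rw [integral_mul_exp_neg_mul_Ioi_zero hl]; positivity)

lemma inv_sq_sub_sq_le_integral_mul_exp_neg_mul_Ioi {B : ℝ} (hB : 0 ≤ B) (hl : 0 < l) :
    (l ^ 2)⁻¹ - B ^ 2 ≤ ∫ x in Ioi B, x * exp (-l * x) := by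
  have hhead : ∫ x in (0 : ℝ)..B, x * exp (-l * x) ≤ ∫ x in (0 : ℝ)..B, B := by
    refine intervalIntegral.integral_mono_on hB
      (by apply Continuous.intervalIntegrable; fun_prop) (by simp) fun x hx => ?_
    have : exp (-l * x) ≤ 1 := exp_le_one_iff.2 (by nlinarith [hx.1])
    nlinarith [hx.1, hx.2, exp_pos (-l * x)]
  have hsplit := intervalIntegral.integral_Ioi_sub_Ioi (integrableOn_mul_exp_neg_mul_Ioi_zero hl) hB
  rw [integral_mul_exp_neg_mul_Ioi_zero hl] at hsplit
  rw [intervalIntegral.integral_const, sub_zero, smul_eq_mul] at hhead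
  nlinarith

end ExpIntegrals

noncomputable def tiltedMean (ν : Measure ℝ) (l : ℝ) : ℝ :=
  (∫ r, r * exp (-l * r) ∂ν) / ∫ r, exp (-l * r) ∂ν

section TiltedMean

variable {ν : Measure ℝ} {C c : ℝ≥0∞} {B η l : ℝ}

lemma tiltedMean_eq_deriv_cgf (hl : -l ∈ interior (integrableExpSet id ν)) :
    tiltedMean ν l = deriv (cgf id ν) (-l) := by
  rw [deriv_cgf hl, tiltedMean, mgf]
  rfl

lemma neg_mem_interior_integrableExpSet (hup : ν ≤ C • volume.restrict (Ioi 0)) (hC : C ≠ ∞)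
    (hl : 0 < l) : -l ∈ interior (integrableExpSet id ν) :=
  interior_maximal
    (fun _ ht => ((integrableOn_exp_mul_Ioi ht 0).smul_measure hC).mono_measure hup)
    isOpen_Iio (neg_lt_zero.2 hl)

lemma integrable_mul_exp_neg_mul (hup : ν ≤ C • volume.restrict (Ioi 0)) (hC : C ≠ ∞)
    (hl : 0 < l) : Integrable (fun r => r * exp (-l * r)) ν := by
  simpa only [id, pow_one] using integrable_pow_mul_exp_of_mem_interior_integrableExpSet
    (neg_mem_interior_integrableExpSet hup hC hl) 1

lemma ae_mul_exp_neg_mul_nonneg (hup : ν ≤ C • volume.restrict (Ioi 0)) :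
    0 ≤ᵐ[ν] fun r => r * exp (-l * r) :=
  Eventually.mono
    ((Measure.absolutelyContinuous_of_le_smul hup).ae_le (ae_restrict_mem measurableSet_Ioi))
    fun _ hr => (mul_pos hr (exp_pos _)).le

lemma measure_ne_ne_zero_of_smul_restrict_Ioi_le (hfar : c • volume.restrict (Ioi B) ≤ ν)
    (hc : c ≠ 0) (a : ℝ) : ν {r | r ≠ a} ≠ 0 := by
  have hinf : volume.restrict (Ioi B) {a}ᶜ = ∞ := by
    rw [Measure.restrict_apply' measurableSet_Ioi, ← sdiff_eq_compl_inter,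
      measure_sdiff_null (Real.volume_singleton), Real.volume_Ioi]
  have h := Measure.le_iff'.1 hfar {a}ᶜ
  rw [Measure.smul_apply, hinf, smul_eq_mul, ENNReal.mul_top hc, top_le_iff] at h
  exact h ▸ ENNReal.top_ne_zero

lemma strictAntiOn_tiltedMean (hup : ν ≤ C • volume.restrict (Ioi 0)) (hC : C ≠ ∞)
    (hfar : c • volume.restrict (Ioi B) ≤ ν) (hc : c ≠ 0) :
    StrictAntiOn (tiltedMean ν) (Ioi 0) := by
  intro a ha b hb hab
  have ha' := neg_mem_interior_integrableExpSet hup hC ha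
  have hb' := neg_mem_interior_integrableExpSet hup hC hb
  rw [tiltedMean_eq_deriv_cgf ha', tiltedMean_eq_deriv_cgf hb']
  exact strictMonoOn_deriv_cgf (measure_ne_ne_zero_of_smul_restrict_Ioi_le hfar hc) hb' ha'
    (neg_lt_neg hab)

lemma continuousOn_tiltedMean (hup : ν ≤ C • volume.restrict (Ioi 0)) (hC : C ≠ ∞) :
    ContinuousOn (tiltedMean ν) (Ioi 0) := by
  have hmaps : MapsTo (fun l : ℝ => -l) (Ioi 0) (interior (integrableExpSet id ν)) :=
    fun _ hl => neg_mem_interior_integrableExpSet hup hC hl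
  exact (continuousOn_deriv_cgf.comp continuousOn_neg hmaps).congr
    fun _ hl => tiltedMean_eq_deriv_cgf (hmaps hl)

lemma integral_exp_neg_mul_pos (hup : ν ≤ C • volume.restrict (Ioi 0)) (hC : C ≠ ∞)
    (hfar : c • volume.restrict (Ioi B) ≤ ν) (hc : c ≠ 0) (hl : 0 < l) :
    0 < ∫ r, exp (-l * r) ∂ν :=
  mgf_pos' (fun h => measure_ne_ne_zero_of_smul_restrict_Ioi_le hfar hc 0 (by simp [h]))
    (interior_subset (s := integrableExpSet id ν) (neg_mem_interior_integrableExpSet hup hC hl))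

lemma integral_exp_neg_mul_le (hup : ν ≤ C • volume.restrict (Ioi 0)) (hC : C ≠ ∞)
    (hl : 0 < l) : ∫ r, exp (-l * r) ∂ν ≤ C.toReal * l⁻¹ := by
  rw [← integral_exp_neg_mul_Ioi_zero hl]
  exact integral_le_toReal_mul_setIntegral hup hC measurableSet_Ioi (fun _ _ => (exp_pos _).le)
    (integrableOn_exp_mul_Ioi (neg_lt_zero.2 hl) 0)

lemma integral_mul_exp_neg_mul_le (hup : ν ≤ C • volume.restrict (Ioi 0)) (hC : C ≠ ∞)
    (hl : 0 < l) : ∫ r, r * exp (-l * r) ∂ν ≤ C.toReal * (l ^ 2)⁻¹ := by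
  rw [← integral_mul_exp_neg_mul_Ioi_zero hl]
  exact integral_le_toReal_mul_setIntegral hup hC measurableSet_Ioi
    (fun x hx => (mul_pos hx (exp_pos _)).le) (integrableOn_mul_exp_neg_mul_Ioi_zero hl)

lemma toReal_mul_le_integral_mul_exp_neg_mul (hup : ν ≤ C • volume.restrict (Ioi 0))
    (hC : C ≠ ∞) (hfar : c • volume.restrict (Ioi B) ≤ ν) (hB : 0 ≤ B) (hl : 0 < l) :
    c.toReal * ((l ^ 2)⁻¹ - B ^ 2) ≤ ∫ r, r * exp (-l * r) ∂ν :=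
  calc c.toReal * ((l ^ 2)⁻¹ - B ^ 2) ≤ c.toReal * ∫ x in Ioi B, x * exp (-l * x) := by
        gcongr; exact inv_sq_sub_sq_le_integral_mul_exp_neg_mul_Ioi hB hl
    _ ≤ _ := toReal_mul_setIntegral_le_integral hfar
        (ae_mul_exp_neg_mul_nonneg hup) (integrable_mul_exp_neg_mul hup hC hl)

lemma toReal_mul_le_integral_exp_neg_mul (hup : ν ≤ C • volume.restrict (Ioi 0))
    (hC : C ≠ ∞) (hnear : c • volume.restrict (Ioc 0 η) ≤ ν) (hη : 0 ≤ η) (hl : 0 < l) :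
    c.toReal * ((1 - exp (-l * η)) * l⁻¹) ≤ ∫ r, exp (-l * r) ∂ν := by
  rw [← integral_exp_neg_mul_Ioc_zero hη hl]
  exact toReal_mul_setIntegral_le_integral hnear (ae_of_all _ fun _ => (exp_pos _).le)
    (interior_subset (s := integrableExpSet id ν) (neg_mem_interior_integrableExpSet hup hC hl))

lemma tendsto_tiltedMean_nhdsGT_zero (hup : ν ≤ C • volume.restrict (Ioi 0)) (hC : C ≠ ∞)
    (hfar : c • volume.restrict (Ioi B) ≤ ν) (hc : c ≠ 0) (hc_top : c ≠ ∞) (hB : 0 ≤ B) :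
    Tendsto (tiltedMean ν) (𝓝[>] 0) atTop := by
  have hCpos : 0 < C.toReal := by
    simpa using (integral_exp_neg_mul_pos hup hC hfar hc one_pos).trans_le
      (integral_exp_neg_mul_le hup hC one_pos)
  have hK : 0 < c.toReal / C.toReal := div_pos (ENNReal.toReal_pos hc hc_top) hCpos
  have hlow : ∀ l ∈ Ioi (0 : ℝ), c.toReal / C.toReal * (l⁻¹ - B ^ 2 * l) ≤ tiltedMean ν l := by
    intro l hl
    calc c.toReal / C.toReal * (l⁻¹ - B ^ 2 * l)
        = c.toReal * ((l ^ 2)⁻¹ - B ^ 2) / (C.toReal * l⁻¹) := by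
          field_simp [(mem_Ioi.1 hl).ne']
      _ ≤ tiltedMean ν l := div_le_div₀ (integral_nonneg_of_ae (ae_mul_exp_neg_mul_nonneg hup))
          (toReal_mul_le_integral_mul_exp_neg_mul hup hC hfar hB hl)
          (integral_exp_neg_mul_pos hup hC hfar hc hl) (integral_exp_neg_mul_le hup hC hl)
  have hlin : Tendsto (fun l : ℝ => B ^ 2 * l) (𝓝[>] 0) (𝓝 0) := by
    simpa using ((continuous_const_mul (B ^ 2)).tendsto 0).mono_left nhdsWithin_le_nhds
  refine tendsto_atTop_mono' _ (eventually_nhdsWithin_of_forall hlow) ?_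
  simpa [sub_eq_add_neg] using (tendsto_inv_nhdsGT_zero.atTop_add hlin.neg).const_mul_atTop hK

lemma tendsto_tiltedMean_atTop (hup : ν ≤ C • volume.restrict (Ioi 0)) (hC : C ≠ ∞)
    (hnear : c • volume.restrict (Ioc 0 η) ≤ ν) (hc : c ≠ 0) (hc_top : c ≠ ∞) (hη : 0 < η) :
    Tendsto (tiltedMean ν) atTop (𝓝 0) := by
  have hupper : ∀ l > (0 : ℝ),
      tiltedMean ν l ≤ C.toReal / c.toReal * (l * (1 - exp (-l * η)))⁻¹ := by
    intro l hl
    have hexp : 0 < 1 - exp (-l * η) := sub_pos.2 (exp_lt_one_iff.2 (by nlinarith))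
    have hc_pos := ENNReal.toReal_pos hc hc_top
    calc tiltedMean ν l
        ≤ C.toReal * (l ^ 2)⁻¹ / (c.toReal * ((1 - exp (-l * η)) * l⁻¹)) :=
          div_le_div₀ (by positivity) (integral_mul_exp_neg_mul_le hup hC hl) (by positivity)
            (toReal_mul_le_integral_exp_neg_mul hup hC hnear hη.le hl)
      _ = C.toReal / c.toReal * (l * (1 - exp (-l * η)))⁻¹ := by field_simp
  have hexp : Tendsto (fun l => exp (-l * η)) atTop (𝓝 0) :=
    tendsto_exp_atBot.comp (tendsto_neg_atTop_atBot.atBot_mul_const hη)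
  have hgrow : Tendsto (fun l => l * (1 - exp (-l * η))) atTop atTop :=
    tendsto_id.atTop_mul_pos one_pos (by simpa using tendsto_const_nhds.sub hexp)
  have hnonneg (l : ℝ) : 0 ≤ tiltedMean ν l :=
    div_nonneg (integral_nonneg_of_ae (ae_mul_exp_neg_mul_nonneg hup))
      (integral_nonneg fun _ => (exp_pos _).le)
  exact tendsto_of_tendsto_of_tendsto_of_le_of_le' tendsto_const_nhds
    (by simpa using (tendsto_inv_atTop_zero.comp hgrow).const_mul (C.toReal / c.toReal))
    (Eventually.of_forall hnonneg) ((eventually_gt_atTop 0).mono hupper)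

end TiltedMean

noncomputable def heightDistribution {E : Type*} [MeasureSpace E] (S : Set (E × ℝ)) :
    Measure ℝ :=
  (volume.restrict S).map Prod.snd

section HeightDistribution

variable {E : Type*} [MeasureSpace E]

lemma heightDistribution_prod [SigmaFinite (volume : Measure E)] (A : Set E) (T : Set ℝ) :
    heightDistribution (A ×ˢ T) = volume A • volume.restrict T := by
  rw [heightDistribution, Measure.volume_eq_prod, ← Measure.prod_restrict, Measure.map_snd_prod,
    Measure.restrict_apply_univ]

lemma heightDistribution_mono {S S' : Set (E × ℝ)} (h : S ⊆ S') :
    heightDistribution S ≤ heightDistribution S' :=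
  Measure.map_mono (Measure.restrict_mono h le_rfl) measurable_snd

end HeightDistribution

lemma volume_ball_sdiff_closedBall_half_pos {E : Type*} [NormedAddCommGroup E] [NormedSpace ℝ E]
    [Nontrivial E] [MeasureSpace E] [(volume : Measure E).IsOpenPosMeasure] (x : E) {R : ℝ}
    (hR : 0 < R) : 0 < volume (Metric.ball x R \ Metric.closedBall x (R / 2)) := by
  obtain ⟨v, hv⟩ := exists_norm_eq E (show 0 ≤ 3 * R / 4 by positivity)
  refine (Metric.isOpen_ball.sdiff Metric.isClosed_closedBall).measure_pos _ ⟨x + v, ?_, ?_⟩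
  · rw [Metric.mem_ball, dist_eq_norm, add_sub_cancel_left, hv]; linarith
  · rw [Metric.mem_closedBall, dist_eq_norm, add_sub_cancel_left, hv, not_le]; linarith

section GasRegion

variable {E : Type*} [NormedAddCommGroup E] {Db : Set E} {xh : E} {R y : ℝ}

lemma gasRegion_subset_prod_Ioi : gasRegion Db xh R y ⊆ Db ×ˢ Ioi 0 :=
  fun _ hp => ⟨hp.1, hp.2.1⟩

lemma prod_Ioi_subset_gasRegion (hR : 0 ≤ R) (hyR : 0 ≤ y + R) :
    Db ×ˢ Ioi (y + R) ⊆ gasRegion Db xh R y := by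
  rintro ⟨x, r⟩ ⟨hx, hr⟩
  refine ⟨hx, hyR.trans_lt hr, ?_⟩
  nlinarith [sq_nonneg ‖x - xh‖, mem_Ioi.1 hr]

lemma annulus_prod_Ioc_subset_gasRegion (hball : Metric.ball xh R ⊆ Db) (hR : 0 < R)
    (hy : R ≤ y) :
    (Metric.ball xh R \ Metric.closedBall xh (R / 2)) ×ˢ Ioc 0 (R ^ 2 / (8 * y)) ⊆
      gasRegion Db xh R y := by
  rintro ⟨x, r⟩ ⟨⟨hxR, hxR2⟩, hr0, hrη⟩
  have hx : R / 2 < ‖x - xh‖ := by simpa [dist_eq_norm] using hxR2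
  have hr : r * (8 * y) ≤ R ^ 2 := (le_div_iff₀ (by linarith)).1 hrη
  refine ⟨hball hxR, hr0, ?_⟩
  -- `(r - y)² ≥ y² - 2ry ≥ R² - R²/4`, while `‖x - x̂‖² > R²/4`
  nlinarith [mul_le_mul hy hy hR.le (by linarith)]

end GasRegion

section GasMoment

variable {d : ℕ} {Db : Set (EuclideanSpace ℝ (Fin (d - 1)))}
  {xh : EuclideanSpace ℝ (Fin (d - 1))} {R y : ℝ}

lemma gasMoment_eq (n : ℕ) (l : ℝ) :
    gasMoment d Db xh R y n l =
      l * ∫ r, r ^ n * exp (-l * r) ∂heightDistribution (gasRegion Db xh R y) := by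
  rw [gasMoment, heightDistribution, integral_map measurable_snd.aemeasurable (by fun_prop),
    ← integral_const_mul]
  simp_rw [mul_assoc]

lemma gasMoment_one_div_gasMoment_zero {l : ℝ} (hl : l ≠ 0) :
    gasMoment d Db xh R y 1 l / gasMoment d Db xh R y 0 l =
      tiltedMean (heightDistribution (gasRegion Db xh R y)) l := by
  simp only [gasMoment_eq, pow_one, pow_zero, one_mul]
  rw [mul_div_mul_left _ _ hl, tiltedMean]

end GasMoment

theorem archimedes_lambda_unique_general (d : ℕ) (hd : 2 ≤ d)
    (Db : Set (EuclideanSpace ℝ (Fin (d - 1))))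
    (hDbb : Bornology.IsBounded Db) (hDbpos : 0 < volume Db)
    (R : ℝ) (hR : 0 < R) (xh : EuclideanSpace ℝ (Fin (d - 1)))
    (hball : Metric.ball xh R ⊆ Db)
    (y : ℝ) (hy : R ≤ y) :
    StrictAntiOn
        (fun l => gasMoment d Db xh R y 1 l / gasMoment d Db xh R y 0 l) (Ioi 0)
      ∧ ContinuousOn
        (fun l => gasMoment d Db xh R y 1 l / gasMoment d Db xh R y 0 l) (Ioi 0)
      ∧ ∀ u : ℝ, 0 < u →
          ∃! l : ℝ, 0 < l ∧ gasMoment d Db xh R y 1 l / gasMoment d Db xh R y 0 l = u := by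
  have : Nonempty (Fin (d - 1)) := ⟨⟨0, by omega⟩⟩
  set ν := heightDistribution (gasRegion Db xh R y)
  set A := Metric.ball xh R \ Metric.closedBall xh (R / 2)
  have hC : volume Db ≠ ⊤ := hDbb.measure_lt_top.ne
  have hA : 0 < volume A := volume_ball_sdiff_closedBall_half_pos xh hR
  have hη : 0 < R ^ 2 / (8 * y) := div_pos (by positivity) (by linarith)
  have hA_top : volume A ≠ ⊤ := (Metric.isBounded_ball.subset sdiff_subset).measure_lt_top.ne
  have hup : ν ≤ volume Db • volume.restrict (Ioi 0) :=
    heightDistribution_prod Db (Ioi 0) ▸ heightDistribution_mono gasRegion_subset_prod_Ioi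
  have hfar : volume Db • volume.restrict (Ioi (y + R)) ≤ ν :=
    heightDistribution_prod Db _ ▸
      heightDistribution_mono (prod_Ioi_subset_gasRegion hR.le (by linarith))
  have hnear : volume A • volume.restrict (Ioc 0 (R ^ 2 / (8 * y))) ≤ ν :=
    heightDistribution_prod A _ ▸
      heightDistribution_mono (annulus_prod_Ioc_subset_gasRegion hball hR hy)
  have hfg : EqOn (fun l => gasMoment d Db xh R y 1 l / gasMoment d Db xh R y 0 l) (tiltedMean ν)
      (Ioi 0) := fun l hl => gasMoment_one_div_gasMoment_zero (ne_of_gt hl)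
  have hanti := (strictAntiOn_tiltedMean hup hC hfar hDbpos.ne').congr hfg.symm
  have hcont := (continuousOn_tiltedMean hup hC).congr hfg
  refine ⟨hanti, hcont, fun u hu => hanti.existsUnique_eq_of_tendsto hcont ?_ ?_ hu⟩
  · exact (tendsto_tiltedMean_nhdsGT_zero hup hC hfar hDbpos.ne' hC (by linarith)).congr'
      (eventually_nhdsWithin_of_forall fun l hl => (hfg hl).symm)
  · exact (tendsto_tiltedMean_atTop hup hC hnear hA.ne' hA_top hη).congr'
      ((eventually_gt_atTop 0).mono fun l hl => (hfg hl).symm)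

/-- `λ ↦ u(λ,y) = h₁(λ,y)/h₀(λ,y)` is strictly decreasing and continuous
on `(0,∞)`, and for every `u > 0` the equation `u = u(λ,y)` has a unique solution
`λ > 0`. -/
theorem archimedes_lambda_unique (d : ℕ) (hd : 2 ≤ d)
    (Db : Set (EuclideanSpace ℝ (Fin (d - 1)))) (hDb : MeasurableSet Db)
    (hDbb : Bornology.IsBounded Db) (hDbpos : 0 < volume Db)
    (R : ℝ) (hR : 0 < R) (xh : EuclideanSpace ℝ (Fin (d - 1)))
    (hball : Metric.ball xh R ⊆ Db)
    (y : ℝ) (hy : R ≤ y) :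
    StrictAntiOn
        (fun l => gasMoment d Db xh R y 1 l / gasMoment d Db xh R y 0 l) (Ioi 0)
      ∧ ContinuousOn
        (fun l => gasMoment d Db xh R y 1 l / gasMoment d Db xh R y 0 l) (Ioi 0)
      ∧ ∀ u : ℝ, 0 < u →
          ∃! l : ℝ, 0 < l ∧ gasMoment d Db xh R y 1 l / gasMoment d Db xh R y 0 l = u :=
  archimedes_lambda_unique_general d hd Db hDbb hDbpos R hR xh hball y hy
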